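/- arXiv:1401.8254 — 2 statements merged into one kernel-verified Lean document; each statement's English description precedes it below -/
import Mathlib

section
/- (Maclaurin inequality) For λ in the Gårding cone Γ_m and integers 1 ≤ p ≤ m ≤ n, one has C(n,m)^{−1/m} · H_m(λ)^{1/m} ≤ C(n,p)^{−1/p} · H_p(λ)^{1/p}. -/
/-!
Write `E_k = H_k(λ) / C(n,k)`. These are the normalized coefficients `a_{n-k} / C(n,k)` of the
real-rooted polynomial `∏ (X + λ_i)`. Real-rootedness survives differentiation (Rolle) and
reversal, and these two operations bring any three consecutive normalized coefficients to those of
a real-rooted quadratic, whose discriminant is nonnegative: this gives Newton's inequalities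
`E_{k-1} E_{k+1} ≤ E_k²` for every real `λ`. Since `E_0 = 1`, log-concavity makes `E_k^{1/k}`
decreasing as long as the `E_k` stay positive. On `Γ_m` with `H_m > 0` they do, because
`E_j = 0` forces `E_{j+1} = 0`: by Newton if `E_{j-1} > 0`, and otherwise because two consecutive
vanishing coefficients of a real-rooted polynomial force the next one to vanish (after reversal
its roots satisfy `∑ r = ∑ r r' = 0`, hence `∑ r² = 0`).
-/

/-- `esymm n k v` is the `k`-th elementary symmetric polynomial of
`v = (v 0, …, v (n-1))`, with `esymm n 0 v = 1`. -/
noncomputable def esymm (n k : ℕ) (v : Fin n → ℝ) : ℝ :=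
  ∑ s ∈ Finset.univ.powersetCard k, ∏ i ∈ s, v i

namespace Multiset

theorem esymm_cons_succ {R : Type*} [CommSemiring R] (a : R) (s : Multiset R) (k : ℕ) :
    (a ::ₘ s).esymm (k + 1) = s.esymm (k + 1) + a * s.esymm k := by
  simp only [esymm, powersetCard_cons, map_add, sum_add, map_map, Function.comp_def, prod_cons,
    sum_map_mul_left]

theorem sum_map_sq_eq {R : Type*} [CommRing R] (s : Multiset R) :
    (s.map (· ^ 2)).sum = s.esymm 1 ^ 2 - 2 * s.esymm 2 := by
  induction s using Multiset.induction with
  | empty => simp [esymm, powersetCard_zero_right]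
  | cons a s ih =>
    have h0 : s.esymm 0 = 1 := by simp [esymm]
    rw [map_cons, sum_cons, ih, esymm_cons_succ, esymm_cons_succ, h0]
    ring

end Multiset

namespace Polynomial

theorem natDegree_reverse_of_coeff_zero_ne_zero {R : Type*} [Semiring R] {f : R[X]}
    (h₀ : f.coeff 0 ≠ 0) : f.reverse.natDegree = f.natDegree := by
  rw [reverse_natDegree, natTrailingDegree_eq_zero.mpr (Or.inr h₀), Nat.sub_zero]

theorem natDegree_multiset_prod_X_add_C {R : Type*} [CommSemiring R] [Nontrivial R]
    (s : Multiset R) : (s.map fun r => X + C r).prod.natDegree = Multiset.card s := by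
  rw [natDegree_multiset_prod_of_monic _ (by simp [monic_X_add_C])]
  simp

section Field

variable {K : Type*} [Field K]

theorem Splits.reverse {f : K[X]} (hf : f.Splits) : f.reverse.Splits := by
  induction hf using Submonoid.closure_induction with
  | mem g hg =>
    exact Splits.of_natDegree_le_one ((reverse_natDegree_le g).trans
      (by rcases hg with ⟨a, rfl⟩ | ⟨a, rfl⟩ <;> simp))
  | one => rw [← C_1, reverse_C]; exact Splits.C 1
  | mul g h _ _ hg hh => rw [reverse_mul_of_domain]; exact hg.mul hh

noncomputable def normalizedCoeff (f : K[X]) (k : ℕ) : K := f.coeff k / f.natDegree.choose k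

theorem normalizedCoeff_of_natDegree_lt {f : K[X]} {k : ℕ} (hk : f.natDegree < k) :
    f.normalizedCoeff k = 0 := by
  simp [normalizedCoeff, coeff_eq_zero_of_natDegree_lt hk]

theorem normalizedCoeff_reverse {f : K[X]} (h₀ : f.coeff 0 ≠ 0) {k : ℕ} (hk : k ≤ f.natDegree) :
    f.reverse.normalizedCoeff k = f.normalizedCoeff (f.natDegree - k) := by
  rw [normalizedCoeff, normalizedCoeff, natDegree_reverse_of_coeff_zero_ne_zero h₀, coeff_reverse,
    revAt_le hk, Nat.choose_symm hk]

theorem normalizedCoeff_derivative [CharZero K] (f : K[X]) (k : ℕ) :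
    (derivative f).normalizedCoeff k = f.natDegree * f.normalizedCoeff (k + 1) := by
  rcases lt_or_ge f.natDegree (k + 1) with hk | hk
  · rw [normalizedCoeff_of_natDegree_lt hk, normalizedCoeff, coeff_derivative,
      coeff_eq_zero_of_natDegree_lt hk]
    simp
  obtain ⟨d, hd⟩ : ∃ d, f.natDegree = d + 1 := ⟨f.natDegree - 1, by omega⟩
  have hchoose : ((d + 1 : ℕ) : K) * d.choose k = (d + 1).choose (k + 1) * (k + 1) := by
    exact_mod_cast Nat.add_one_mul_choose_eq d k
  have h₁ : (d.choose k : K) ≠ 0 := by exact_mod_cast (Nat.choose_pos (by omega)).ne'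
  have h₂ : ((d + 1).choose (k + 1) : K) ≠ 0 := by exact_mod_cast (Nat.choose_pos (by omega)).ne'
  rw [normalizedCoeff, normalizedCoeff, natDegree_derivative, coeff_derivative, hd,
    Nat.add_sub_cancel, mul_div_assoc', div_eq_div_iff h₁ h₂]
  linear_combination (-f.coeff (k + 1)) * hchoose

end Field

section Real

theorem Splits.derivative {f : ℝ[X]} (hf : f.Splits) : f.derivative.Splits := by
  rw [splits_iff_card_roots] at hf ⊢
  have h₁ := card_roots_le_derivative f
  have h₂ := card_roots' f.derivative
  rw [natDegree_derivative] at h₂ ⊢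
  omega

theorem Splits.normalizedCoeff_mul_le_sq_of_natDegree_eq_two {f : ℝ[X]} (hf : f.Splits)
    (hd : f.natDegree = 2) :
    f.normalizedCoeff 0 * f.normalizedCoeff 2 ≤ f.normalizedCoeff 1 ^ 2 := by
  obtain ⟨x, hx⟩ := hf.exists_eval_eq_zero
    (by rw [(degree_eq_iff_natDegree_eq_of_pos two_pos).mpr hd]; decide)
  rw [eval_eq_sum_range, hd] at hx
  simp only [Finset.sum_range_succ, Finset.sum_range_zero] at hx
  have hdiscrim := discrim_eq_sq_of_quadratic_eq_zero (a := f.coeff 2) (b := f.coeff 1)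
    (c := f.coeff 0) (x := x) (by linear_combination hx)
  simp only [normalizedCoeff, hd, discrim, Nat.choose_zero_right, Nat.choose_self,
    Nat.choose_one_right, Nat.cast_one, div_one, Nat.cast_ofNat] at hdiscrim ⊢
  nlinarith [sq_nonneg (2 * f.coeff 2 * x + f.coeff 1)]

theorem normalizedCoeff_succ_mul_le_sq_of_derivative {f : ℝ[X]} (hf : f.natDegree ≠ 0) {k : ℕ}
    (h : (derivative f).normalizedCoeff k * (derivative f).normalizedCoeff (k + 2) ≤
      (derivative f).normalizedCoeff (k + 1) ^ 2) :
    f.normalizedCoeff (k + 1) * f.normalizedCoeff (k + 3) ≤ f.normalizedCoeff (k + 2) ^ 2 := by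
  simp only [normalizedCoeff_derivative] at h
  have hd : (0 : ℝ) < (f.natDegree : ℝ) ^ 2 := by positivity
  refine le_of_mul_le_mul_left ?_ hd
  linear_combination h

theorem Splits.normalizedCoeff_mul_le_sq {f : ℝ[X]} (hf : f.Splits) (k : ℕ) :
    f.normalizedCoeff k * f.normalizedCoeff (k + 2) ≤ f.normalizedCoeff (k + 1) ^ 2 := by
  induction hd : f.natDegree using Nat.strong_induction_on generalizing f k with
  | _ d ih =>
  rcases lt_or_ge d (k + 2) with hk | hk
  · rw [normalizedCoeff_of_natDegree_lt (k := k + 2) (hd ▸ hk), mul_zero]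
    positivity
  cases k with
  | succ k =>
    exact normalizedCoeff_succ_mul_le_sq_of_derivative (by omega)
      (ih _ (by rw [natDegree_derivative]; omega) hf.derivative k rfl)
  | zero =>
    rcases hk.eq_or_lt with hd₂ | hd₃
    · exact hf.normalizedCoeff_mul_le_sq_of_natDegree_eq_two (by omega)
    by_cases h₀ : f.coeff 0 = 0
    · simp only [normalizedCoeff, h₀, zero_div, zero_mul]
      positivity
    -- Reversing `f` moves the low coefficients to the top, where differentiation reaches them.
    have hg := natDegree_reverse_of_coeff_zero_ne_zero h₀
    have key := normalizedCoeff_succ_mul_le_sq_of_derivative (by omega)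
      (ih _ (by rw [natDegree_derivative]; omega) hf.reverse.derivative (d - 3) rfl)
    rw [normalizedCoeff_reverse h₀ (by omega), normalizedCoeff_reverse h₀ (by omega),
      normalizedCoeff_reverse h₀ (by omega), hd, show d - (d - 3 + 1) = 2 by omega,
      show d - (d - 3 + 3) = 0 by omega, show d - (d - 3 + 2) = 1 by omega] at key
    linarith

theorem Splits.coeff_zero_eq_zero {f : ℝ[X]} (hf : f.Splits) (hd : 3 ≤ f.natDegree)
    (h₁ : f.coeff 1 = 0) (h₂ : f.coeff 2 = 0) : f.coeff 0 = 0 := by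
  by_contra h₀
  have hg := natDegree_reverse_of_coeff_zero_ne_zero h₀
  have hlc : f.reverse.leadingCoeff ≠ 0 := by
    rw [Ne, leadingCoeff_eq_zero]
    rintro h
    rw [h, natDegree_zero] at hg
    omega
  -- The roots `r` of the reversal have `∑ r = ∑ r r' = 0` by Vieta, hence `∑ r ^ 2 = 0`.
  have hesymm : ∀ j, 1 ≤ j → j ≤ 2 → f.reverse.roots.esymm j = 0 := by
    intro j hj₁ hj₂
    have h := coeff_eq_esymm_roots_of_splits hf.reverse (k := f.natDegree - j) (by omega)
    have hj : f.coeff j = 0 := by interval_cases j <;> assumption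
    rw [coeff_reverse, revAt_le (by omega), hg, Nat.sub_sub_self (by omega), hj] at h
    simpa [hlc] using h
  have hsq : (f.reverse.roots.map (· ^ 2)).sum = 0 := by
    rw [Multiset.sum_map_sq_eq, hesymm 1 le_rfl one_le_two, hesymm 2 one_le_two le_rfl]
    ring
  obtain ⟨r, hr⟩ : ∃ r, r ∈ f.reverse.roots := Multiset.card_pos_iff_exists_mem.mp (by
    rw [← hf.reverse.natDegree_eq_card_roots, hg]; omega)
  have hr₀ : r = 0 := by
    have hle := Multiset.single_le_sum (Multiset.forall_mem_map_iff.mpr fun y _ => sq_nonneg y) _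
      (Multiset.mem_map_of_mem (· ^ 2) hr)
    rw [hsq] at hle
    exact pow_eq_zero_iff two_ne_zero |>.mp (le_antisymm hle (sq_nonneg r))
  have hc := hf.reverse.coeff_zero_eq_leadingCoeff_mul_prod_roots
  rw [Multiset.prod_eq_zero (hr₀ ▸ hr), mul_zero, coeff_zero_reverse, leadingCoeff_eq_zero] at hc
  rw [hc, natDegree_zero] at hd
  omega

theorem Splits.coeff_eq_zero_of_next_two_eq_zero {f : ℝ[X]} (hf : f.Splits) {k : ℕ}
    (hd : k + 3 ≤ f.natDegree) (h₁ : f.coeff (k + 1) = 0) (h₂ : f.coeff (k + 2) = 0) :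
    f.coeff k = 0 := by
  induction k generalizing f with
  | zero => exact hf.coeff_zero_eq_zero hd h₁ h₂
  | succ k ih =>
    have h := ih hf.derivative (by rw [natDegree_derivative]; omega)
      (by rw [coeff_derivative, h₁, zero_mul]) (by rw [coeff_derivative, h₂, zero_mul])
    rw [coeff_derivative, mul_eq_zero] at h
    exact h.resolve_right (by positivity)

end Real

end Polynomial

namespace Multiset

open Polynomial

section Field

variable {K : Type*} [Field K]

noncomputable def esymmMean (s : Multiset K) (k : ℕ) : K := s.esymm k / (card s).choose k

theorem esymmMean_zero (s : Multiset K) : s.esymmMean 0 = 1 := by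
  simp [esymmMean, esymm]

theorem esymmMean_of_card_lt {s : Multiset K} {k : ℕ} (hk : card s < k) : s.esymmMean k = 0 := by
  simp [esymmMean, Nat.choose_eq_zero_of_lt hk]

theorem esymmMean_eq_zero_iff [CharZero K] {s : Multiset K} {k : ℕ} (hk : k ≤ card s) :
    s.esymmMean k = 0 ↔ s.esymm k = 0 := by
  simp [esymmMean, (Nat.choose_pos hk).ne']

theorem normalizedCoeff_prod_X_add_C (s : Multiset K) {k : ℕ} (hk : k ≤ card s) :
    (s.map fun r => X + C r).prod.normalizedCoeff (card s - k) = s.esymmMean k := by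
  rw [normalizedCoeff, prod_X_add_C_coeff _ (Nat.sub_le _ _), natDegree_multiset_prod_X_add_C,
    Nat.sub_sub_self hk, Nat.choose_symm hk, esymmMean]

theorem splits_prod_X_add_C (s : Multiset K) : (s.map fun r => X + C r).prod.Splits :=
  Splits.multisetProd (by simp [Splits.X_add_C])

end Field

theorem esymmMean_mul_le_sq (s : Multiset ℝ) (k : ℕ) :
    s.esymmMean k * s.esymmMean (k + 2) ≤ s.esymmMean (k + 1) ^ 2 := by
  rcases lt_or_ge (card s) (k + 2) with hk | hk
  · rw [esymmMean_of_card_lt hk, mul_zero]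
    positivity
  have key := (splits_prod_X_add_C s).normalizedCoeff_mul_le_sq (card s - (k + 2))
  rw [show card s - (k + 2) + 1 = card s - (k + 1) by omega,
    show card s - (k + 2) + 2 = card s - k by omega, normalizedCoeff_prod_X_add_C s hk,
    normalizedCoeff_prod_X_add_C s (by omega), normalizedCoeff_prod_X_add_C s (by omega)] at key
  linarith

theorem esymm_add_two_eq_zero (s : Multiset ℝ) {k : ℕ} (hk : 1 ≤ k) (h₀ : s.esymm k = 0)
    (h₁ : s.esymm (k + 1) = 0) : s.esymm (k + 2) = 0 := by
  rcases lt_or_ge (card s) (k + 2) with hn | hn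
  · simp [esymm, powersetCard_eq_empty _ hn]
  have hcoeff : ∀ j ≤ card s, s.esymm j = (s.map fun r => X + C r).prod.coeff (card s - j) :=
    fun j hj => by rw [prod_X_add_C_coeff _ (Nat.sub_le _ _), Nat.sub_sub_self hj]
  rw [hcoeff _ hn]
  refine (splits_prod_X_add_C s).coeff_eq_zero_of_next_two_eq_zero ?_ ?_ ?_
  · rw [natDegree_multiset_prod_X_add_C]; omega
  · rw [show card s - (k + 2) + 1 = card s - (k + 1) by omega, ← hcoeff _ (by omega), h₁]
  · rw [show card s - (k + 2) + 2 = card s - k by omega, ← hcoeff _ (by omega), h₀]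

theorem esymmMean_pos (s : Multiset ℝ) {m : ℕ} (hnonneg : ∀ j ≤ m, 0 ≤ s.esymmMean j)
    (hm : 0 < s.esymmMean m) {j : ℕ} (hj : j ≤ m) : 0 < s.esymmMean j := by
  have hmn : m ≤ card s := by
    by_contra! h
    exact hm.ne' (esymmMean_of_card_lt h)
  have step : ∀ i, i + 2 ≤ m → s.esymmMean (i + 1) = 0 → s.esymmMean (i + 2) = 0 := by
    intro i hi h₁
    rcases (hnonneg i (by omega)).lt_or_eq with h₀ | h₀
    · have key := s.esymmMean_mul_le_sq i
      rw [h₁, zero_pow two_ne_zero] at key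
      exact le_antisymm (nonpos_of_mul_nonpos_right key h₀) (hnonneg _ hi)
    · have hi₁ : 1 ≤ i := Nat.one_le_iff_ne_zero.mpr (by rintro rfl; simp [esymmMean_zero] at h₀)
      rw [esymmMean_eq_zero_iff (by omega)] at h₁ ⊢
      exact s.esymm_add_two_eq_zero hi₁ ((esymmMean_eq_zero_iff (by omega)).mp h₀.symm) h₁
  by_contra! hj₀
  have hj₁ : j ≠ 0 := by rintro rfl; norm_num [esymmMean_zero] at hj₀
  have hzero : ∀ i, j ≤ i → i ≤ m → s.esymmMean i = 0 := by
    intro i hji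
    induction i, hji using Nat.le_induction with
    | base => exact fun _ => le_antisymm hj₀ (hnonneg j hj)
    | succ i hji ih =>
      intro hi
      obtain ⟨i, rfl⟩ : ∃ i', i = i' + 1 := ⟨i - 1, by omega⟩
      exact step i hi (ih (by omega))
  exact hm.ne' (hzero m hj le_rfl)

end Multiset

theorem rpow_one_div_succ_le_of_pow_le {a b : ℝ} (ha : 0 ≤ a) (hb : 0 ≤ b) {k : ℕ} (hk : k ≠ 0)
    (h : a ^ k ≤ b ^ (k + 1)) : a ^ (1 / ((k + 1 : ℕ) : ℝ)) ≤ b ^ (1 / (k : ℝ)) := by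
  have hk' : (0 : ℝ) < k := Nat.cast_pos.mpr (Nat.pos_of_ne_zero hk)
  rw [← Real.rpow_le_rpow_iff (z := k * (k + 1)) (by positivity) (by positivity) (by positivity),
    ← Real.rpow_mul ha, ← Real.rpow_mul hb,
    show 1 / ((k + 1 : ℕ) : ℝ) * (k * (k + 1)) = (k : ℕ) by push_cast; field_simp,
    show 1 / (k : ℝ) * (k * (k + 1)) = (k + 1 : ℕ) by push_cast; field_simp,
    Real.rpow_natCast, Real.rpow_natCast]
  exact h

section LogConcave

variable {E : ℕ → ℝ} {m : ℕ}

theorem pow_succ_le_pow_of_mul_le_sq (h₀ : E 0 = 1) (hpos : ∀ k ≤ m, 0 < E k)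
    (hE : ∀ k, k + 2 ≤ m → E k * E (k + 2) ≤ E (k + 1) ^ 2) {k : ℕ} (hk : k + 1 ≤ m) :
    E (k + 1) ^ k ≤ E k ^ (k + 1) := by
  induction k with
  | zero => simp [h₀]
  | succ k ih =>
    have ha := hpos k (by omega)
    have hb := hpos (k + 1) (by omega)
    have hc := hpos (k + 2) (by omega)
    have h₁ : E k ^ (k + 1) * E (k + 2) ^ (k + 1) ≤ E (k + 1) ^ (k + 2) * E (k + 1) ^ k := by
      rw [← mul_pow, ← pow_add, show k + 2 + k = 2 * (k + 1) by ring, pow_mul]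
      exact pow_le_pow_left₀ (by positivity) (hE k hk) _
    refine le_of_mul_le_mul_left (h₁.trans ?_) (pow_pos ha (k + 1))
    rw [mul_comm (E k ^ _)]
    exact mul_le_mul_of_nonneg_left (ih (by omega)) (by positivity)

theorem rpow_one_div_le_of_mul_le_sq (h₀ : E 0 = 1) (hpos : ∀ k ≤ m, 0 < E k)
    (hE : ∀ k, k + 2 ≤ m → E k * E (k + 2) ≤ E (k + 1) ^ 2) {p : ℕ} (hp : 1 ≤ p) (hpm : p ≤ m) :
    E m ^ (1 / (m : ℝ)) ≤ E p ^ (1 / (p : ℝ)) := by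
  induction m, hpm using Nat.le_induction with
  | base => exact le_rfl
  | succ m hpm ih =>
    refine (rpow_one_div_succ_le_of_pow_le (hpos _ le_rfl).le (hpos m (by omega)).le (by omega)
      (pow_succ_le_pow_of_mul_le_sq h₀ hpos hE le_rfl)).trans ?_
    exact ih (fun k hk => hpos k (by omega)) (fun k hk => hE k (by omega))

end LogConcave

theorem maclaurin_general (n m p : ℕ) (hp : 1 ≤ p) (hpm : p ≤ m)
    (lam : Fin n → ℝ)
    (hlam : ∀ j : ℕ, 1 ≤ j → j ≤ m → 0 ≤ esymm n j lam) :
    (n.choose m : ℝ) ^ (-(1 / (m : ℝ))) * esymm n m lam ^ (1 / (m : ℝ)) ≤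
      (n.choose p : ℝ) ^ (-(1 / (p : ℝ))) * esymm n p lam ^ (1 / (p : ℝ)) := by
  set s : Multiset ℝ := Finset.univ.val.map lam
  have hcard : Multiset.card s = n := by simp [s]
  have hesymm : ∀ j, esymm n j lam = s.esymm j := fun j => (Finset.esymm_map_val lam _ j).symm
  have hmean : ∀ j, 1 ≤ j → j ≤ m → (n.choose j : ℝ) ^ (-(1 / (j : ℝ))) *
      esymm n j lam ^ (1 / (j : ℝ)) = s.esymmMean j ^ (1 / (j : ℝ)) := by
    intro j hj₁ hj
    have hC : (0 : ℝ) ≤ n.choose j := Nat.cast_nonneg _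
    rw [Multiset.esymmMean, hcard, ← hesymm, Real.div_rpow (hlam j hj₁ hj) hC, Real.rpow_neg hC,
      inv_mul_eq_div]
  have hnonneg : ∀ j ≤ m, 0 ≤ s.esymmMean j := by
    intro j hj
    rcases j.eq_zero_or_pos with rfl | hj₁
    · rw [s.esymmMean_zero]
      exact zero_le_one
    · exact div_nonneg (hesymm j ▸ hlam j hj₁ hj) (Nat.cast_nonneg _)
  rw [hmean m (hp.trans hpm) le_rfl, hmean p hp hpm]
  rcases (hnonneg m le_rfl).lt_or_eq with hm | hm
  · exact rpow_one_div_le_of_mul_le_sq s.esymmMean_zero (fun k hk => s.esymmMean_pos hnonneg hm hk)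
      (fun k _ => s.esymmMean_mul_le_sq k) hp hpm
  · rw [← hm, Real.zero_rpow (one_div_ne_zero (Nat.cast_ne_zero.mpr (by omega)))]
    exact Real.rpow_nonneg (hnonneg p hpm) _

/-- Maclaurin inequality: for `λ` in the Gårding cone `Γ_m` and `1 ≤ p ≤ m ≤ n`,
`C(n,m)^{−1/m} H_m(λ)^{1/m} ≤ C(n,p)^{−1/p} H_p(λ)^{1/p}`. -/
theorem maclaurin (n m p : ℕ) (hp : 1 ≤ p) (hpm : p ≤ m) (hmn : m ≤ n)
    (lam : Fin n → ℝ)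
    (hlam : ∀ j : ℕ, 1 ≤ j → j ≤ m → 0 ≤ esymm n j lam) :
    (n.choose m : ℝ) ^ (-(1 / (m : ℝ))) * esymm n m lam ^ (1 / (m : ℝ)) ≤
      (n.choose p : ℝ) ^ (-(1 / (p : ℝ))) * esymm n p lam ^ (1 / (p : ℝ)) :=
  maclaurin_general n m p hp hpm lam hlam
end

section
/- For positive semidefinite symmetric n × n real matrices A, one has (det A)^{1/n} = inf { tr(HA) : H symmetric positive definite with det H = n^{−n} }. -/
/-!
By AM-GM on the eigenvalues of `√H A √H`, every admissible `H` has
`tr (H A) = tr (√H A √H) ≥ n (det H · det A)^{1/n} = (det A)^{1/n}`. For positive definite `A`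
equality holds at `H = (det A)^{1/n} / n · A⁻¹`. For singular `A`, the optimal `H` for the
positive definite `A + ε • 1` gives `tr (H A) ≤ tr (H (A + ε • 1)) = det (A + ε • 1)^{1/n}`,
and this tends to `(det A)^{1/n}` as `ε → 0⁺`.
-/

open Topology
open scoped MatrixOrder

namespace Matrix

variable {ι : Type*} [Fintype ι] [DecidableEq ι]

theorem PosSemidef.det_rpow_le_trace_div [Nonempty ι] {M : Matrix ι ι ℝ} (hM : M.PosSemidef) :
    M.det ^ (Fintype.card ι : ℝ)⁻¹ ≤ M.trace / Fintype.card ι := by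
  have amgm := Real.geom_mean_le_arith_mean Finset.univ (fun _ ↦ 1) hM.1.eigenvalues
    (fun _ _ ↦ zero_le_one) (by simp [Fintype.card_pos]) (fun i _ ↦ hM.eigenvalues_nonneg i)
  simpa [hM.1.det_eq_prod_eigenvalues, hM.1.trace_eq_sum_eigenvalues] using amgm

theorem PosSemidef.det_mul_det_rpow_le_trace_mul_div [Nonempty ι] {H A : Matrix ι ι ℝ}
    (hH : H.PosSemidef) (hA : A.PosSemidef) :
    (H.det * A.det) ^ (Fintype.card ι : ℝ)⁻¹ ≤ (H * A).trace / Fintype.card ι := by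
  set S := CFC.sqrt H
  have hS : S.PosSemidef := nonneg_iff_posSemidef.mp (CFC.sqrt_nonneg H)
  have hSS : S * S = H := CFC.sqrt_mul_sqrt_self H hH.nonneg
  have hSAS : (S * A * S).PosSemidef := by
    simpa only [hS.1.eq] using hA.mul_mul_conjTranspose_same S
  have hdet : (S * A * S).det = H.det * A.det := by
    rw [← hSS, det_mul, det_mul, det_mul]; ring
  have htr : (S * A * S).trace = (H * A).trace := by
    rw [trace_mul_cycle, hSS]
  simpa [hdet, htr] using hSAS.det_rpow_le_trace_div

theorem PosDef.exists_posDef_det_eq_trace_mul_eq [Nonempty ι] {B : Matrix ι ι ℝ}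
    (hB : B.PosDef) : ∃ H : Matrix ι ι ℝ, H.PosDef ∧
      H.det = ((Fintype.card ι : ℝ) ^ Fintype.card ι)⁻¹ ∧
      (H * B).trace = B.det ^ (Fintype.card ι : ℝ)⁻¹ := by
  set c := B.det ^ (Fintype.card ι : ℝ)⁻¹ / Fintype.card ι
  have hc : 0 < c := by have := hB.det_pos; positivity
  refine ⟨c • B⁻¹, hB.inv.smul hc, ?_, ?_⟩
  · rw [det_smul, det_nonsing_inv, Ring.inverse_eq_inv, div_pow,
      Real.rpow_inv_natCast_pow hB.det_pos.le Fintype.card_ne_zero]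
    field_simp [hB.det_pos.ne']
  · rw [smul_mul, nonsing_inv_mul B hB.det_pos.ne'.isUnit, trace_smul, trace_one, smul_eq_mul,
      div_mul_cancel₀ _ (by positivity)]

theorem PosSemidef.exists_posDef_det_eq_trace_mul_le [Nonempty ι] {A : Matrix ι ι ℝ}
    (hA : A.PosSemidef) {ε : ℝ} (hε : 0 < ε) : ∃ H : Matrix ι ι ℝ, H.PosDef ∧
      H.det = ((Fintype.card ι : ℝ) ^ Fintype.card ι)⁻¹ ∧
      (H * A).trace ≤ (A + ε • 1).det ^ (Fintype.card ι : ℝ)⁻¹ := by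
  obtain ⟨H, hH, hdet, htr⟩ :=
    (PosDef.posSemidef_add hA (PosDef.one.smul hε)).exists_posDef_det_eq_trace_mul_eq
  refine ⟨H, hH, hdet, htr ▸ ?_⟩
  have : 0 ≤ ε * H.trace := mul_nonneg hε.le hH.posSemidef.trace_nonneg
  simpa [mul_add, trace_add] using this

end Matrix

/-- For a real symmetric positive semidefinite `n × n` matrix `A`,
`(det A)^{1/n} = inf { tr(HA) : H symmetric positive definite, det H = n^{−n} }`. -/
theorem det_rpow_eq_inf_trace (n : ℕ) (hn : 0 < n)
    (A : Matrix (Fin n) (Fin n) ℝ) (hA : A.PosSemidef) :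
    A.det ^ ((n : ℝ)⁻¹) =
      sInf {t : ℝ | ∃ H : Matrix (Fin n) (Fin n) ℝ,
        H.IsSymm ∧ H.PosDef ∧ H.det = ((n : ℝ) ^ n)⁻¹ ∧ t = (H * A).trace} := by
  have : Nonempty (Fin n) := ⟨⟨0, hn⟩⟩
  set S := {t : ℝ | ∃ H : Matrix (Fin n) (Fin n) ℝ,
    H.IsSymm ∧ H.PosDef ∧ H.det = ((n : ℝ) ^ n)⁻¹ ∧ t = (H * A).trace}
  have h_lower : ∀ t ∈ S, A.det ^ (n : ℝ)⁻¹ ≤ t := by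
    rintro t ⟨H, -, hH, hdet, rfl⟩
    have key := hH.posSemidef.det_mul_det_rpow_le_trace_mul_div hA
    rw [Fintype.card_fin, hdet, Real.mul_rpow (by positivity) hA.det_nonneg, ← inv_pow,
      Real.pow_rpow_inv_natCast (by positivity) hn.ne'] at key
    rwa [inv_mul_eq_div, div_le_div_iff_of_pos_right (by positivity)] at key
  have h_upper : ∀ ε : ℝ, 0 < ε → sInf S ≤ (A + ε • 1).det ^ (n : ℝ)⁻¹ := by
    intro ε hε
    obtain ⟨H, hH, hdet, htr⟩ := hA.exists_posDef_det_eq_trace_mul_le hε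
    simp only [Fintype.card_fin] at hdet htr
    have hS : (H * A).trace ∈ S := ⟨H, Matrix.isHermitian_iff_isSymm.mp hH.1, hH, hdet, rfl⟩
    exact (csInf_le ⟨_, h_lower⟩ hS).trans htr
  have h_cont : ContinuousAt (fun ε : ℝ ↦ (A + ε • 1).det ^ (n : ℝ)⁻¹) 0 :=
    (continuous_const.add (continuous_id.smul continuous_const)).matrix_det.continuousAt
      |>.rpow_const (Or.inr (by positivity))
  obtain ⟨H, hH, hdet, -⟩ := hA.exists_posDef_det_eq_trace_mul_le one_pos
  simp only [Fintype.card_fin] at hdet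
  have hS : (H * A).trace ∈ S := ⟨H, Matrix.isHermitian_iff_isSymm.mp hH.1, hH, hdet, rfl⟩
  refine le_antisymm (le_csInf ⟨_, hS⟩ h_lower) ?_
  refine ge_of_tendsto (x := 𝓝[>] 0) ?_ (eventually_nhdsWithin_of_forall h_upper)
  simpa using h_cont.tendsto.mono_left nhdsWithin_le_nhds
end
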